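/- arXiv:1911.08626 — 2 statements merged into one kernel-verified Lean document; each statement's English description precedes it below -/
import Mathlib

section
/- Flow decomposition on a DAG: any nonnegative integer flow on a finite directed acyclic graph with a single source of supply k and sinks absorbing total k decomposes into k directed paths from the source to sinks, such that the number of paths using any edge e is at most f(e). -/
/-- Net inflow at vertex `v` for a flow `f` on a finite directed graph. -/
def netInflow {V : Type*} [Fintype V] (f : V → V → ℕ) (v : V) : ℤ :=
  (∑ u, (f u v : ℤ)) - ∑ w, (f v w : ℤ)

/-!
Peel off one path at a time. Following edges of positive flow from the source must, by
acyclicity, stop at a vertex `w` without outflow; the path is simple, so it uses each edge at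
most once, and it carries one unit into `w`, so `w` has positive net inflow and is therefore a
sink with positive demand. Subtracting the path leaves a flow of the same kind with supply
`k - 1` and the demand at `w` lowered by one, and induction on `k` finishes.
-/

open Finset Function Relation

section Acyclic

variable {α : Type*} {R : α → α → Prop}

lemma wellFounded_flip_of_acyclic [Finite α] (hR : ∀ a, ¬ TransGen R a a) :
    WellFounded (flip R) :=
  have : IsTrans α fun a b => TransGen R b a := ⟨fun _ _ _ hab hbc => hbc.trans hab⟩
  have : Std.Irrefl fun a b => TransGen R b a := ⟨hR⟩
  Subrelation.wf (r := fun a b => TransGen R b a) (fun h => .single h)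
    (Finite.wellFounded_of_trans_of_irrefl _)

lemma exists_isChain_to_terminal (hR : WellFounded (flip R)) (a : α) :
    ∃ (l : List α) (b : α),
      l.head? = some a ∧ l.getLast? = some b ∧ l.IsChain R ∧ ∀ c, ¬ R b c := by
  induction a using hR.induction with
  | _ a ih =>
    by_cases h : ∃ c, R a c
    · obtain ⟨c, hac⟩ := h
      obtain ⟨l, b, hhead, hlast, hl, hb⟩ := ih c hac
      obtain ⟨l, rfl⟩ : ∃ l', l = c :: l' := List.head?_eq_some_iff.1 hhead
      exact ⟨a :: c :: l, b, rfl, by rwa [List.getLast?_cons_cons], hl.cons_cons hac, hb⟩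
    · exact ⟨[a], a, rfl, rfl, .singleton a, not_exists.1 h⟩

lemma List.IsChain.nodup_of_acyclic (hR : ∀ a, ¬ TransGen R a a) {l : List α}
    (hl : l.IsChain R) : l.Nodup :=
  (hl.imp fun _ _ => TransGen.single).pairwise.imp
    fun {a b} (hab : TransGen R a b) (e : a = b) => hR b (e ▸ hab)

lemma List.IsChain.rel_of_mem_consecutivePairs {l : List α} (hl : l.IsChain R) {a b : α}
    (hab : (a, b) ∈ l.consecutivePairs) : R a b := by
  induction hl with
  | nil | singleton => simp [List.consecutivePairs] at hab
  | cons_cons hcd _ ih =>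
    rcases List.mem_cons.1 hab with h | h
    · obtain ⟨rfl, rfl⟩ := Prod.ext_iff.1 h
      exact hcd
    · exact ih h

lemma List.Nodup.consecutivePairs {l : List α} (hl : l.Nodup) : l.consecutivePairs.Nodup :=
  .of_map Prod.snd <| by
    rw [List.map_snd_zip (by simp)]
    exact hl.sublist (List.tail_sublist l)

end Acyclic

section PathFlow

variable {V : Type*} [DecidableEq V]

def pathFlow (p : List V) (u v : V) : ℕ :=
  p.consecutivePairs.count (u, v)

lemma pathFlow_cons_cons (a b : V) (l : List V) :
    pathFlow (a :: b :: l) = pathFlow [a, b] + pathFlow (b :: l) := by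
  ext u v
  simp [pathFlow, List.consecutivePairs, List.count_cons, add_comm]

lemma pathFlow_le_of_isChain {f : V → V → ℕ}
    (hacyc : ∀ v, ¬ TransGen (fun u v => 0 < f u v) v v) {p : List V}
    (hp : p.IsChain fun u v => 0 < f u v) : pathFlow p ≤ f := by
  intro u v
  by_cases huv : (u, v) ∈ p.consecutivePairs
  · calc pathFlow p u v ≤ 1 :=
          List.nodup_iff_count_le_one.1 (hp.nodup_of_acyclic hacyc).consecutivePairs _
      _ ≤ f u v := hp.rel_of_mem_consecutivePairs huv
  · simp [pathFlow, List.count_eq_zero_of_not_mem huv]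

end PathFlow

section NetInflow

variable {V : Type*} [Fintype V]

lemma netInflow_add (f g : V → V → ℕ) (v : V) :
    netInflow (f + g) v = netInflow f v + netInflow g v := by
  simp only [netInflow, Pi.add_apply, Nat.cast_add, sum_add_distrib]
  ring

lemma netInflow_tsub {f g : V → V → ℕ} (hgf : g ≤ f) (v : V) :
    netInflow (f - g) v = netInflow f v - netInflow g v := by
  rw [eq_sub_iff_add_eq, ← netInflow_add, tsub_add_cancel_of_le hgf]

lemma netInflow_nonneg_of_forall_eq_zero {f : V → V → ℕ} {w : V} (hw : ∀ u, f w u = 0) :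
    0 ≤ netInflow f w := by
  simp only [netInflow, hw, Nat.cast_zero, sum_const_zero, sub_zero]
  positivity

variable [DecidableEq V]

lemma netInflow_pathFlow_pair (a b v : V) :
    netInflow (pathFlow [a, b]) v = (if b = v then 1 else 0) - (if a = v then 1 else 0) := by
  by_cases ha : a = v <;> by_cases hb : b = v <;>
    simp [netInflow, pathFlow, List.consecutivePairs, List.count_cons, Prod.ext_iff, ha, hb]

lemma netInflow_pathFlow (p : List V) (v : V) :
    netInflow (pathFlow p) v =
      (if p.getLast? = some v then 1 else 0) - (if p.head? = some v then 1 else 0) := by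
  induction p with
  | nil => simp [netInflow, pathFlow, List.consecutivePairs]
  | cons a l ih =>
    cases l with
    | nil => simp [netInflow, pathFlow, List.consecutivePairs]
    | cons b l =>
      rw [pathFlow_cons_cons, netInflow_add, ih, netInflow_pathFlow_pair, List.getLast?_cons_cons]
      simp only [List.head?_cons, Option.some.injEq]
      ring

end NetInflow

section Decomposition

variable {V : Type*} [Fintype V] [DecidableEq V] {E : V → V → Prop} {f : V → V → ℕ} {v₀ w : V}
  {snk : Finset V} {k : ℕ} {d : V → ℕ} {p : List V}

structure IsSingleSourceFlow (E : V → V → Prop) (f : V → V → ℕ) (v₀ : V) (snk : Finset V) (k : ℕ)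
    (d : V → ℕ) : Prop where
  supp : ∀ u v, ¬ E u v → f u v = 0
  netInflow_source : netInflow f v₀ = -(k : ℤ)
  netInflow_sink : ∀ w ∈ snk, netInflow f w = (d w : ℤ)
  sum_demand : ∑ w ∈ snk, d w = k
  netInflow_other : ∀ v, v ≠ v₀ → v ∉ snk → netInflow f v = 0

structure IsPathDecomposition (E : V → V → Prop) (f : V → V → ℕ) (v₀ : V) (snk : Finset V)
    (d : V → ℕ) {k : ℕ} (P : Fin k → List V) : Prop where
  isChain : ∀ i, (P i).IsChain E
  head? : ∀ i, (P i).head? = some v₀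
  getLast?_mem : ∀ i, ∃ w ∈ snk, (P i).getLast? = some w
  card_getLast? : ∀ w ∈ snk, #{i | (P i).getLast? = some w} = d w
  sum_pathFlow_le : ∀ u v, ∑ i, pathFlow (P i) u v ≤ f u v

namespace IsSingleSourceFlow

omit [DecidableEq V] in
lemma source_notMem (hF : IsSingleSourceFlow E f v₀ snk k d) (hk : 0 < k) : v₀ ∉ snk :=
  fun h => by
    have := hF.netInflow_sink v₀ h
    rw [hF.netInflow_source] at this
    omega

lemma exists_path_to_sink (hF : IsSingleSourceFlow E f v₀ snk k d)
    (hacyc : ∀ v, ¬ TransGen E v v) (hk : 0 < k) :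
    ∃ p w, p.IsChain E ∧ p.head? = some v₀ ∧ p.getLast? = some w ∧ w ∈ snk ∧ 0 < d w ∧
      pathFlow p ≤ f := by
  have hposE : ∀ u v, 0 < f u v → E u v := fun u v h => by
    by_contra hE
    simp [hF.supp u v hE] at h
  have hacyc' : ∀ v, ¬ TransGen (fun u v => 0 < f u v) v v := fun v h =>
    hacyc v (TransGen.mono hposE v v h)
  obtain ⟨p, w, hhead, hlast, hp, hw⟩ :=
    exists_isChain_to_terminal (wellFounded_flip_of_acyclic hacyc') v₀
  have hpf := pathFlow_le_of_isChain hacyc' hp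
  have hwv₀ : w ≠ v₀ := by
    rintro rfl
    have := netInflow_nonneg_of_forall_eq_zero (f := f) fun u => Nat.eq_zero_of_not_pos (hw u)
    rw [hF.netInflow_source] at this
    omega
  -- `f - pathFlow p` still has no outflow at `w`, and `pathFlow p` has net inflow `1` there.
  have hinflow : 0 < netInflow f w := by
    have hres := netInflow_nonneg_of_forall_eq_zero (f := f - pathFlow p) (w := w) fun u => by
      simp [Nat.eq_zero_of_not_pos (hw u)]
    rw [netInflow_tsub hpf, netInflow_pathFlow] at hres
    simp only [hlast, hhead, Option.some.injEq, hwv₀.symm, ↓reduceIte] at hres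
    omega
  have hwsnk : w ∈ snk := by
    by_contra h
    rw [hF.netInflow_other w hwv₀ h] at hinflow
    exact hinflow.false
  refine ⟨p, w, hp.imp hposE, hhead, hlast, hwsnk, ?_, hpf⟩
  have := hF.netInflow_sink w hwsnk
  omega

lemma sub_pathFlow (hF : IsSingleSourceFlow E f v₀ snk (k + 1) d) (hhead : p.head? = some v₀)
    (hlast : p.getLast? = some w) (hw : w ∈ snk) (hdw : 0 < d w) (hpf : pathFlow p ≤ f) :
    IsSingleSourceFlow E (f - pathFlow p) v₀ snk k (update d w (d w - 1)) := by
  have hv₀ := hF.source_notMem k.succ_pos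
  have hwv₀ : w ≠ v₀ := fun h => hv₀ (h ▸ hw)
  have hnet : ∀ v, netInflow (f - pathFlow p) v =
      netInflow f v - (if w = v then 1 else 0) + (if v₀ = v then 1 else 0) := fun v => by
    rw [netInflow_tsub hpf, netInflow_pathFlow, hlast, hhead]
    simp only [Option.some.injEq]
    ring
  refine ⟨fun u v huv => by simp [hF.supp u v huv], ?_, fun x hx => ?_, ?_, fun x hx₀ hx => ?_⟩
  · simp [hnet, hF.netInflow_source, hwv₀]
  · have hx₀ : v₀ ≠ x := fun h => hv₀ (h ▸ hx)
    rw [hnet, hF.netInflow_sink x hx]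
    rcases eq_or_ne w x with rfl | hwx
    · simp only [↓reduceIte, hx₀, add_zero, update_self]
      omega
    · simp [hwx, hx₀, update_of_ne hwx.symm]
  · have := hF.sum_demand
    rw [sum_eq_add_sum_sdiff_singleton_of_mem hw] at this
    rw [sum_update_of_mem hw]
    omega
  · have hwx : w ≠ x := fun h => hx (h ▸ hw)
    simp [hnet, hF.netInflow_other x hx₀ hx, hwx, Ne.symm hx₀]

end IsSingleSourceFlow

namespace IsPathDecomposition

omit [Fintype V] in
lemma of_fin_zero (P : Fin 0 → List V) (hd : ∀ w ∈ snk, d w = 0) :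
    IsPathDecomposition E f v₀ snk d P :=
  ⟨finZeroElim, finZeroElim, finZeroElim, fun w hw => by simp [hd w hw], fun _ _ => by simp⟩

omit [Fintype V] in
lemma cons {P : Fin k → List V}
    (hP : IsPathDecomposition E (f - pathFlow p) v₀ snk (update d w (d w - 1)) P)
    (hp : p.IsChain E) (hhead : p.head? = some v₀) (hlast : p.getLast? = some w) (hw : w ∈ snk)
    (hdw : 0 < d w) (hpf : pathFlow p ≤ f) :
    IsPathDecomposition E f v₀ snk d (Fin.cons p P : Fin (k + 1) → List V) where
  isChain := Fin.cases hp hP.isChain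
  head? := Fin.cases hhead hP.head?
  getLast?_mem := Fin.cases ⟨w, hw, hlast⟩ hP.getLast?_mem
  card_getLast? x hx := by
    rw [Fin.card_filter_univ_succ']
    simp only [Fin.cons_zero, Fin.cons_succ, hP.card_getLast? x hx, hlast, Option.some.injEq]
    rcases eq_or_ne w x with rfl | hwx
    · simp only [↓reduceIte, update_self]
      omega
    · simp [hwx, update_of_ne hwx.symm]
  sum_pathFlow_le u v := by
    have hrest := hP.sum_pathFlow_le u v
    have hpuv : pathFlow p u v ≤ f u v := hpf u v
    rw [Pi.sub_apply, Pi.sub_apply] at hrest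
    rw [Fin.sum_univ_succ]
    simp only [Fin.cons_zero, Fin.cons_succ]
    omega

end IsPathDecomposition

theorem IsSingleSourceFlow.exists_isPathDecomposition (hacyc : ∀ v, ¬ TransGen E v v)
    (hF : IsSingleSourceFlow E f v₀ snk k d) :
    ∃ P : Fin k → List V, IsPathDecomposition E f v₀ snk d P := by
  induction k generalizing f d with
  | zero => exact ⟨Fin.elim0, .of_fin_zero _ fun w hw => sum_eq_zero_iff.1 hF.sum_demand w hw⟩
  | succ k ih =>
    obtain ⟨p, w, hp, hhead, hlast, hw, hdw, hpf⟩ := hF.exists_path_to_sink hacyc k.succ_pos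
    obtain ⟨P, hP⟩ := ih (hF.sub_pathFlow hhead hlast hw hdw hpf)
    exact ⟨Fin.cons p P, hP.cons hp hhead hlast hw hdw hpf⟩

end Decomposition

theorem flow_decomposition_dag_general {V : Type*} [Fintype V] [DecidableEq V]
    (E : V → V → Prop)
    (hacyc : ∀ v, ¬ Relation.TransGen E v v)
    (f : V → V → ℕ) (hsupp : ∀ u v, ¬ E u v → f u v = 0)
    (v₀ : V) (snk : Finset V) (k : ℕ) (d : V → ℕ)
    (hsrc : netInflow f v₀ = -(k : ℤ))
    (hsnk : ∀ w ∈ snk, netInflow f w = (d w : ℤ))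
    (htot : ∑ w ∈ snk, d w = k)
    (hzero : ∀ v, v ≠ v₀ → v ∉ snk → netInflow f v = 0) :
    ∃ P : Fin k → List V,
      (∀ i, (P i).Chain' E) ∧
      (∀ i, (P i).head? = some v₀) ∧
      (∀ i, ∃ w ∈ snk, (P i).getLast? = some w) ∧
      (∀ w ∈ snk, (Finset.univ.filter fun i => (P i).getLast? = some w).card = d w) ∧
      (∀ u v, (∑ i, ((P i).zip (P i).tail).count (u, v)) ≤ f u v) := by
  obtain ⟨P, hP⟩ := IsSingleSourceFlow.exists_isPathDecomposition hacyc
    ⟨hsupp, hsrc, hsnk, htot, hzero⟩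
  exact ⟨P, hP.isChain, hP.head?, hP.getLast?_mem, hP.card_getLast?, hP.sum_pathFlow_le⟩

/-- Flow decomposition on a DAG. Any nonnegative integer flow on a
finite directed acyclic graph `E` with a single source `v₀` of supply `k`, sinks
`snk` absorbing `d w ≥ 0` units each with total `k`, and zero net inflow
elsewhere, decomposes into `k` directed paths from the source to sinks, with
exactly `d w` paths ending at each sink `w`, and the number of times any edge
`(u, v)` is used by the paths is at most `f u v`. -/
theorem flow_decomposition_dag {V : Type*} [Fintype V] [DecidableEq V]
    (E : V → V → Prop) [DecidableRel E]
    (hacyc : ∀ v, ¬ Relation.TransGen E v v)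
    (f : V → V → ℕ) (hsupp : ∀ u v, ¬ E u v → f u v = 0)
    (v₀ : V) (snk : Finset V) (k : ℕ) (d : V → ℕ)
    (hv₀ : v₀ ∉ snk)
    (hsrc : netInflow f v₀ = -(k : ℤ))
    (hsnk : ∀ w ∈ snk, netInflow f w = (d w : ℤ))
    (htot : ∑ w ∈ snk, d w = k)
    (hzero : ∀ v, v ≠ v₀ → v ∉ snk → netInflow f v = 0) :
    ∃ P : Fin k → List V,
      (∀ i, (P i).Chain' E) ∧
      (∀ i, (P i).head? = some v₀) ∧
      (∀ i, ∃ w ∈ snk, (P i).getLast? = some w) ∧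
      (∀ w ∈ snk, (Finset.univ.filter fun i => (P i).getLast? = some w).card = d w) ∧
      (∀ u v, (∑ i, ((P i).zip (P i).tail).count (u, v)) ≤ f u v) :=
  flow_decomposition_dag_general E hacyc f hsupp v₀ snk k d hsrc hsnk htot hzero
end

section
/- If the communication relation ⇝ restricted to each time layer is acyclic, then the full time-extended graph (mobility and communication edges together) is acyclic. -/
/-- The full edge relation of the time-extended graph: mobility edges
`(s, t) → (s', t+1)` for `(s, s') ∈ →` and communication edges
`(s, t) → (s', t)` for `(s, s') ∈ ⇝`. -/
def timeExtFull {S : Type*} (Mob Comm : S → S → Prop) : S × ℕ → S × ℕ → Prop :=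
  fun v v' => (Mob v.1 v'.1 ∧ v'.2 = v.2 + 1) ∨ (Comm v.1 v'.1 ∧ v'.2 = v.2)

/-- If the communication relation `⇝` restricted to each time
layer is acyclic, then the full time-extended graph (mobility and communication
edges together) is acyclic. -/
theorem time_extended_full_acyclic {S : Type*} (Mob Comm : S → S → Prop)
    (hcomm : ∀ s : S, ¬ Relation.TransGen Comm s s) :
    ∀ v : S × ℕ, ¬ Relation.TransGen (timeExtFull Mob Comm) v v := by
  have key : ∀ v w : S × ℕ, Relation.TransGen (timeExtFull Mob Comm) v w →
      v.2 ≤ w.2 ∧ (v.2 = w.2 → Relation.TransGen Comm v.1 w.1) := by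
    intro v w h
    induction h with
    | single h =>
      rcases h with ⟨_, ht⟩ | ⟨hc, ht⟩
      · exact ⟨by omega, fun he => by omega⟩
      · exact ⟨le_of_eq ht.symm, fun _ => Relation.TransGen.single hc⟩
    | tail _ h ih =>
      rcases h with ⟨_, ht⟩ | ⟨hc, ht⟩
      · exact ⟨by omega, fun he => by omega⟩
      · exact ⟨by omega, fun he => (ih.2 (by omega)).tail hc⟩
  intro v h
  exact hcomm v.1 ((key v v h).2 rfl)
end
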